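/- arXiv:0808.2669 — 2 statements merged into one kernel-verified Lean document; each statement's English description precedes it below -/
import Mathlib

section
/- Let Φ be a linear map on N × N complex matrices that is trace-preserving and positive (maps positive semidefinite matrices to positive semidefinite matrices). Then Φ has a fixed point that is a density matrix: there exists a positive semidefinite ρ with trace 1 such that Φ(ρ) = ρ. -/
open scoped ComplexOrder
open Filter Topology Finset

/-!
For a linear map, averaging replaces Brouwer: if `T` maps a compact convex set `K` into itself, the
Cesàro means `(n + 1)⁻¹ • ∑ k ≤ n, T^[k] x` stay in `K`, and `T` moves them by
`(n + 1)⁻¹ • (T^[n + 1] x - x)`, which tends to `0` because `K - K` is bounded. Hence every cluster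
point of the means is a fixed point. Density matrices form such a set: they are closed, convex,
and bounded since `‖ρ i j‖ ^ 2 ≤ ‖ρ i i‖ * ‖ρ j j‖ ≤ 1`.
-/

section CesaroMean

variable {E : Type*} [AddCommGroup E] [Module ℝ E]

noncomputable def cesaroMean (T : E → E) (x : E) (n : ℕ) : E :=
  ((n : ℝ) + 1)⁻¹ • ∑ k ∈ Finset.range (n + 1), T^[k] x

theorem Convex.cesaroMean_mem {K : Set E} (hK : Convex ℝ K) {T : E → E} (hT : Set.MapsTo T K K)
    {x : E} (hx : x ∈ K) (n : ℕ) : cesaroMean T x n ∈ K := by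
  rw [cesaroMean, smul_sum]
  refine hK.sum_mem (fun _ _ => by positivity) ?_ fun k _ => hT.iterate k hx
  rw [sum_const, card_range, nsmul_eq_mul]
  push_cast
  exact mul_inv_cancel₀ (by positivity)

theorem LinearMap.map_cesaroMean_sub (T : E →ₗ[ℝ] E) (x : E) (n : ℕ) :
    T (cesaroMean T x n) - cesaroMean T x n = ((n : ℝ) + 1)⁻¹ • (T^[n + 1] x - x) := by
  have hshift : T (∑ k ∈ Finset.range (n + 1), T^[k] x) =
      ∑ k ∈ Finset.range (n + 1), T^[k + 1] x := by
    simp only [map_sum, Function.iterate_succ_apply']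
  rw [cesaroMean, map_smul, hshift, ← smul_sub, ← sum_sub_distrib,
    sum_range_sub (fun k => T^[k] x), Function.iterate_zero_apply]

variable [TopologicalSpace E] [IsTopologicalAddGroup E] [ContinuousSMul ℝ E]

theorem IsCompact.tendsto_map_cesaroMean_sub {K : Set E} (hK : IsCompact K) (T : E →ₗ[ℝ] E)
    (hT : Set.MapsTo T K K) {x : E} (hx : x ∈ K) :
    Tendsto (fun n => T (cesaroMean T x n) - cesaroMean T x n) atTop (𝓝 0) := by
  simp only [T.map_cesaroMean_sub]
  refine ((hK.isVonNBounded ℝ).sub (hK.isVonNBounded ℝ)).smul_tendsto_zero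
    (Eventually.of_forall fun n => Set.sub_mem_sub (hT.iterate (n + 1) hx) hx) ?_
  simpa only [one_div] using tendsto_one_div_add_atTop_nhds_zero_nat (𝕜 := ℝ)

theorem IsCompact.exists_isFixedPt_of_convex_of_mapsTo [T2Space E] {K : Set E} (hK : IsCompact K)
    (hconv : Convex ℝ K) (hne : K.Nonempty) (T : E →ₗ[ℝ] E) (hTc : Continuous T)
    (hT : Set.MapsTo T K K) : ∃ y ∈ K, Function.IsFixedPt T y := by
  obtain ⟨x, hx⟩ := hne
  obtain ⟨y, hyK, hy⟩ := hK.exists_mapClusterPt (f := atTop) (u := cesaroMean T x)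
    (tendsto_principal.2 (Eventually.of_forall (hconv.cesaroMean_mem hT hx)))
  have hclust :
      MapClusterPt (T y - y) atTop (fun n => T (cesaroMean T x n) - cesaroMean T x n) :=
    hy.continuousAt_comp (f := fun z => T z - z) (hTc.sub continuous_id).continuousAt
  exact ⟨y, hyK, sub_eq_zero.1 <|
    eq_of_nhds_neBot (hclust.clusterPt.mono (hK.tendsto_map_cesaroMean_sub T hT hx))⟩

end CesaroMean

namespace Matrix

variable {n 𝕜 : Type*} [RCLike 𝕜]

theorem PosSemidef.norm_apply_sq_le {A : Matrix n n 𝕜} (hA : A.PosSemidef) (i j : n) :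
    ‖A i j‖ ^ 2 ≤ ‖A i i‖ * ‖A j j‖ := by
  classical
  have hdet := (hA.submatrix ![i, j]).det_nonneg
  rw [det_fin_two] at hdet
  simp only [Fin.isValue, submatrix_apply, cons_val_zero, cons_val_one, sub_nonneg] at hdet
  rw [← hA.isHermitian.apply j i, RCLike.star_def, RCLike.mul_conj,
    ← RCLike.norm_of_nonneg' (hA.diag_nonneg (i := i)),
    ← RCLike.norm_of_nonneg' (hA.diag_nonneg (i := j))] at hdet
  exact_mod_cast hdet

variable [Fintype n]

theorem isClosed_setOf_posSemidef : IsClosed {A : Matrix n n 𝕜 | A.PosSemidef} := by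
  have hset : {A : Matrix n n 𝕜 | A.PosSemidef} =
      {A | Aᴴ = A} ∩ ⋂ x : n → 𝕜, {A | 0 ≤ star x ⬝ᵥ A *ᵥ x} := by
    ext A
    simp only [posSemidef_iff_dotProduct_mulVec, Set.mem_ofPred_eq, Set.mem_inter_iff,
      Set.mem_iInter, IsHermitian]
  rw [hset]
  exact (isClosed_eq continuous_id.matrix_conjTranspose continuous_id).inter <|
    isClosed_iInter fun x => isClosed_le continuous_const <|
      continuous_const.dotProduct (continuous_id.matrix_mulVec continuous_const)

theorem PosSemidef.norm_diag_le_norm_trace {A : Matrix n n 𝕜} (hA : A.PosSemidef) (i : n) :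
    ‖A i i‖ ≤ ‖A.trace‖ := by
  have hle : A i i ≤ A.trace :=
    single_le_sum (fun k _ => hA.diag_nonneg (i := k)) (mem_univ i)
  rw [← RCLike.ofReal_le_ofReal (K := 𝕜), RCLike.norm_of_nonneg' hA.diag_nonneg,
    RCLike.norm_of_nonneg' hA.trace_nonneg]
  exact hle

theorem PosSemidef.norm_apply_le_norm_trace {A : Matrix n n 𝕜} (hA : A.PosSemidef) (i j : n) :
    ‖A i j‖ ≤ ‖A.trace‖ := by
  refine le_of_pow_le_pow_left₀ two_ne_zero (norm_nonneg _) ?_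
  calc ‖A i j‖ ^ 2 ≤ ‖A i i‖ * ‖A j j‖ := hA.norm_apply_sq_le i j
    _ ≤ ‖A.trace‖ ^ 2 := by
      rw [sq]
      exact mul_le_mul (hA.norm_diag_le_norm_trace i) (hA.norm_diag_le_norm_trace j)
        (norm_nonneg _) (norm_nonneg _)

end Matrix

variable (n 𝕜 : Type*) [Fintype n] [RCLike 𝕜]

def densityMatrices : Set (Matrix n n 𝕜) := {ρ | ρ.PosSemidef ∧ ρ.trace = 1}

variable {n 𝕜}

theorem convex_densityMatrices : Convex ℝ (densityMatrices n 𝕜) := by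
  rintro A ⟨hA, htrA⟩ B ⟨hB, htrB⟩ a b ha hb hab
  refine ⟨(hA.smul ha).add (hB.smul hb), ?_⟩
  rw [Matrix.trace_add, Matrix.trace_smul, Matrix.trace_smul, htrA, htrB, ← add_smul, hab,
    one_smul]

theorem densityMatrices_nonempty [Nonempty n] : (densityMatrices n 𝕜).Nonempty := by
  classical
  have hcard : (Fintype.card n : ℝ) ≠ 0 := Nat.cast_ne_zero.2 Fintype.card_ne_zero
  refine ⟨(Fintype.card n : ℝ)⁻¹ • 1, Matrix.PosSemidef.one.smul (by positivity), ?_⟩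
  rw [Matrix.trace_smul, Matrix.trace_one, RCLike.real_smul_eq_coe_mul]
  push_cast
  exact inv_mul_cancel₀ (by exact_mod_cast hcard)

theorem isCompact_densityMatrices : IsCompact (densityMatrices n 𝕜) := by
  have hbox : IsCompact
      (Set.univ.pi fun _ : n => Set.univ.pi fun _ : n => Metric.closedBall (0 : 𝕜) 1) :=
    isCompact_univ_pi fun _ => isCompact_univ_pi fun _ => isCompact_closedBall 0 1
  refine hbox.of_isClosed_subset ?_ fun A ⟨hA, htr⟩ => ?_
  · exact Matrix.isClosed_setOf_posSemidef.inter <|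
      isClosed_eq continuous_id.matrix_trace continuous_const
  · simp only [Set.mem_univ_pi, mem_closedBall_zero_iff]
    intro i j
    simpa [htr] using hA.norm_apply_le_norm_trace i j

theorem stmt_8 {N : ℕ} [NeZero N]
    (Φ : Matrix (Fin N) (Fin N) ℂ →ₗ[ℂ] Matrix (Fin N) (Fin N) ℂ)
    (htr : ∀ A, (Φ A).trace = A.trace)
    (hpos : ∀ A : Matrix (Fin N) (Fin N) ℂ, A.PosSemidef → (Φ A).PosSemidef) :
    ∃ ρ : Matrix (Fin N) (Fin N) ℂ, ρ.PosSemidef ∧ ρ.trace = 1 ∧ Φ ρ = ρ := by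
  obtain ⟨ρ, ⟨hρ, hρtr⟩, hfix⟩ :=
    (isCompact_densityMatrices (n := Fin N) (𝕜 := ℂ)).exists_isFixedPt_of_convex_of_mapsTo
      convex_densityMatrices densityMatrices_nonempty (Φ.restrictScalars ℝ)
      (LinearMap.continuous_of_finiteDimensional _) fun A hA => ⟨hpos A hA.1, (htr A).trans hA.2⟩
  exact ⟨ρ, hρ, hρtr, hfix⟩
end

section
/- Let f : B → B be a function on a finite set B, let C ⊆ B be the set of cyclic elements of f, and let p : B → [0,1] be a probability distribution that is an ε-fixed-point of f in total variation distance: (1/2)·Σ_x |p(x) − (f⋆p)(x)| ≤ ε. Then there exists a probability distribution q supported on C with total variation distance between p and q at most 2·|B|·ε. -/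
/-!
Let `δ = ∑ₓ |p x - (f⋆p) x|`. For any set `s`, the mass `p` puts on `s` exceeds the mass it puts on
`f⁻¹ s` by at most `δ`, since the latter is the mass of `f⋆p` on `s`. Iterating `|B|` times, and
using that `f^[|B|]` maps every point into a cycle, the mass outside the cyclic set `C` is at most
`|B| δ ≤ 2|B|ε`. Moving all of that mass onto a single cyclic point gives `q`, at total variation
distance exactly the mass moved.
-/

open Finset Function

namespace Function

theorem iterate_card_mem_periodicPts {α : Type*} [Fintype α] (f : α → α) (x : α) :
    f^[Fintype.card α] x ∈ periodicPts f := by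
  obtain ⟨i, j, hne, heq⟩ := Fintype.exists_ne_map_eq_of_card_lt
    (fun i : Fin (Fintype.card α + 1) => f^[i] x) (by simp)
  wlog hlt : i < j generalizing i j
  · exact this j i hne.symm heq.symm (lt_of_le_of_ne (not_lt.1 hlt) hne.symm)
  have hij : (i : ℕ) < j := hlt
  have hper : f^[i] x ∈ periodicPts f := by
    refine mk_mem_periodicPts (n := j - i) (by omega) ?_
    change f^[j - i] (f^[i] x) = f^[i] x
    rw [← iterate_add_apply, Nat.sub_add_cancel hij.le]
    exact heq.symm
  rw [show Fintype.card α = (Fintype.card α - i) + i by omega, iterate_add_apply]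
  exact (bijOn_periodicPts f).mapsTo.iterate _ hper

end Function

section Pushforward

variable {α β : Type*} [Fintype α]

def pushforward [DecidableEq β] (f : α → β) (p : α → ℝ) (y : β) : ℝ :=
  ∑ x with f x = y, p x

theorem sum_pushforward [DecidableEq β] (f : α → β) (p : α → ℝ) (s : Finset β) :
    ∑ y ∈ s, pushforward f p y = ∑ x with f x ∈ s, p x :=
  sum_fiberwise_eq_sum_filter univ s f p

variable [DecidableEq α]

theorem sum_sub_sum_preimage_le (f : α → α) (p : α → ℝ) (s : Finset α) :
    ∑ x ∈ s, p x - ∑ x with f x ∈ s, p x ≤ ∑ x, |p x - pushforward f p x| := by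
  rw [← sum_pushforward, ← sum_sub_distrib]
  calc ∑ x ∈ s, (p x - pushforward f p x)
      ≤ ∑ x ∈ s, |p x - pushforward f p x| := sum_le_sum fun x _ => le_abs_self _
    _ ≤ ∑ x, |p x - pushforward f p x| :=
      sum_le_sum_of_subset_of_nonneg (subset_univ s) fun x _ _ => abs_nonneg _

theorem sum_sub_sum_preimage_iterate_le (f : α → α) (p : α → ℝ) (s : Finset α) (k : ℕ) :
    ∑ x ∈ s, p x - ∑ x with f^[k] x ∈ s, p x ≤ k * ∑ x, |p x - pushforward f p x| := by
  induction k with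
  | zero =>
    rw [Nat.cast_zero, zero_mul, sub_nonpos]
    refine le_of_eq (sum_congr ?_ fun _ _ => rfl)
    ext x
    rw [mem_filter_univ, iterate_zero_apply]
  | succ k ih =>
    let t : Finset α := {y | f^[k] y ∈ s}
    have hpre : ∑ x with f^[k + 1] x ∈ s, p x = ∑ x with f x ∈ t, p x := by
      refine sum_congr ?_ fun _ _ => rfl
      ext x
      rw [mem_filter_univ, mem_filter_univ, mem_filter_univ, iterate_succ_apply]
    have hstep := sum_sub_sum_preimage_le f p t
    rw [Nat.cast_succ, add_one_mul]
    linarith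

theorem sum_compl_le_card_mul (f : α → α) (p : α → ℝ) (C : Finset α)
    (hC : ∀ x ∈ periodicPts f, x ∈ C) :
    ∑ x ∈ Cᶜ, p x ≤ Fintype.card α * ∑ x, |p x - pushforward f p x| := by
  have hempty : ({x | f^[Fintype.card α] x ∈ Cᶜ} : Finset α) = ∅ :=
    filter_false_of_mem fun x _ => by
      simpa using hC _ (iterate_card_mem_periodicPts f x)
  have h := sum_sub_sum_preimage_iterate_le f p Cᶜ (Fintype.card α)
  rwa [hempty, sum_empty, sub_zero] at h

end Pushforward

theorem exists_supported_sum_abs_sub_eq {α : Type*} [Fintype α] [DecidableEq α] (p : α → ℝ)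
    (hp : ∀ x, 0 ≤ p x) (C : Finset α) {c : α} (hc : c ∈ C) :
    ∃ q : α → ℝ, (∀ x, 0 ≤ q x) ∧ ∑ x, q x = ∑ x, p x ∧ (∀ x, q x ≠ 0 → x ∈ C) ∧
      (1 / 2) * ∑ x, |p x - q x| = ∑ x ∈ Cᶜ, p x := by
  set M := ∑ x ∈ Cᶜ, p x
  have hM : 0 ≤ M := sum_nonneg fun x _ => hp x
  have hsingle : ∑ x, (if x = c then M else 0) = M := by simp
  have hout : ∑ x, (if x ∈ C then 0 else p x) = M := by
    rw [sum_ite, sum_const_zero, zero_add, filter_notMem_eq_sdiff, ← compl_eq_univ_sdiff]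
  refine ⟨fun x => (if x ∈ C then p x else 0) + if x = c then M else 0, ?_, ?_, ?_, ?_⟩
  · intro x
    dsimp only
    split_ifs <;> linarith [hp x]
  · rw [sum_add_distrib, hsingle, sum_ite_mem, univ_inter, ← sum_add_sum_compl C p]
  · intro x hx
    by_contra hxC
    simp [hxC, show x ≠ c from fun h => hxC (h ▸ hc)] at hx
  · have habs : ∀ x, |p x - ((if x ∈ C then p x else 0) + if x = c then M else 0)|
        = (if x = c then M else 0) + if x ∈ C then 0 else p x := by
      intro x
      by_cases hxc : x = c
      · subst hxc
        simp [hc, abs_of_nonneg hM]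
      · by_cases hxC : x ∈ C <;> simp [hxc, hxC, abs_of_nonneg (hp x)]
    simp only [habs, sum_add_distrib, hsingle, hout]
    ring

theorem stmt_16 {B : Type*} [Fintype B] [DecidableEq B] (f : B → B)
    (C : Finset B) (hC : ∀ x, x ∈ C ↔ ∃ k : ℕ, 1 ≤ k ∧ f^[k] x = x)
    (p : B → ℝ) (hnn : ∀ x, 0 ≤ p x) (hsum : ∑ x, p x = 1) (ε : ℝ)
    (hfix : (1 / 2) * ∑ x, |p x - ∑ y ∈ Finset.univ.filter (fun y => f y = x), p y| ≤ ε) :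
    ∃ q : B → ℝ, (∀ x, 0 ≤ q x) ∧ (∑ x, q x = 1) ∧ (∀ x, q x ≠ 0 → x ∈ C) ∧
      (1 / 2) * ∑ x, |p x - q x| ≤ 2 * (Fintype.card B) * ε := by
  have hperC : ∀ x ∈ periodicPts f, x ∈ C := fun x hx => by
    obtain ⟨k, hk, hkx⟩ := mem_periodicPts.1 hx
    exact (hC x).2 ⟨k, hk, hkx⟩
  obtain ⟨x₀⟩ : Nonempty B := by
    by_contra hB
    simp [not_nonempty_iff.1 hB] at hsum
  obtain ⟨q, hq, hqsum, hqC, hdist⟩ :=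
    exists_supported_sum_abs_sub_eq p hnn C (hperC _ (iterate_card_mem_periodicPts f x₀))
  refine ⟨q, hq, hqsum.trans hsum, hqC, ?_⟩
  have hδ : ∑ x, |p x - pushforward f p x| ≤ 2 * ε := by
    unfold pushforward
    linarith
  calc (1 / 2) * ∑ x, |p x - q x| = ∑ x ∈ Cᶜ, p x := hdist
    _ ≤ Fintype.card B * ∑ x, |p x - pushforward f p x| := sum_compl_le_card_mul f p C hperC
    _ ≤ Fintype.card B * (2 * ε) := by gcongr
    _ = 2 * Fintype.card B * ε := by ring
end
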